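/- Fix reals a,b,c > 0 and define polynomials P_w(a,b,c;z) in z by P_1 = 1 − a b z², P_2 = 1 − (a+b) z² + a b (1−c²) z⁴, and P_{w+1} = (1 − (1−c²) z²)·P_w − c² z²·P_{w−1} for w ≥ 2 (the same recurrence defines P_w(0,b,c;z), i.e. the polynomials with a replaced by 0). Then for every integer w ≥ 1, the loop generating function satisfies, as an identity of formal power series in z: P_w(a,b,c;z) · ( Σ_{n≥0} Z_{w,n,0}(a,b,c) zⁿ ) = P_w(0,b,c;z). -/

import Mathlib

open Filter
open scoped Classical

noncomputable section

/-- Step value of a Boolean step: `true` is an up step (+1), `false` a down step (−1). -/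
def stepVal (x : Bool) : ℤ := if x then 1 else -1

/-- Height of the walk after `k` steps. -/
def ht (σ : ℕ → Bool) (k : ℕ) : ℤ := ∑ i ∈ Finset.range k, stepVal (σ i)

/-- Extend a finite sequence of steps to `ℕ → Bool`. -/
def extFun {n : ℕ} (σ : Fin n → Bool) : ℕ → Bool :=
  fun i => if h : i < n then σ ⟨i, h⟩ else false

/-- The first `n` steps of `σ` stay in the strip `0 ≤ y ≤ w`. -/
def IsWalk (w n : ℕ) (σ : ℕ → Bool) : Prop :=
  ∀ k ≤ n, 0 ≤ ht σ k ∧ ht σ k ≤ (w : ℤ)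

/-- Number of contacts with the bottom wall (excluding the origin):
`m_a(φ) = #{1 ≤ k ≤ n : h_k = 0}`. -/
def ma (n : ℕ) (σ : ℕ → Bool) : ℕ :=
  ((Finset.Icc 1 n).filter (fun k => ht σ k = 0)).card

/-- Number of contacts with the top wall: `m_b(φ) = #{1 ≤ k ≤ n : h_k = w}`. -/
def mb (w n : ℕ) (σ : ℕ → Bool) : ℕ :=
  ((Finset.Icc 1 n).filter (fun k => ht σ k = (w : ℤ))).card

/-- Number of stiffness points: `m_c(φ) = #{1 ≤ k ≤ n−1 : σ_k = σ_{k+1}}`. -/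
def mc (n : ℕ) (σ : ℕ → Bool) : ℕ :=
  ((Finset.range (n - 1)).filter (fun i => σ i = σ (i + 1))).card

/-- Boltzmann weight of a walk: `W(φ) = a^{m_a} b^{m_b} c^{m_c}`. -/
def wt (w n : ℕ) (a b c : ℝ) (σ : ℕ → Bool) : ℝ :=
  a ^ ma n σ * b ^ mb w n σ * c ^ mc n σ

/-- Partition function `Z_{w,n}(a,b,c)`: sum of weights over all walks of length `n`
in the strip of width `w`. -/
def Z (w n : ℕ) (a b c : ℝ) : ℝ :=
  ∑ σ ∈ Finset.univ.filter (fun σ : Fin n → Bool => IsWalk w n (extFun σ)),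
    wt w n a b c (extFun σ)

/-- Fixed-endpoint partition function `Z_{w,n,h}(a,b,c)`: sum over walks of length `n`
in the strip of width `w` ending at height `h`. -/
def Zh (w n h : ℕ) (a b c : ℝ) : ℝ :=
  ∑ σ ∈ Finset.univ.filter
      (fun σ : Fin n → Bool => IsWalk w n (extFun σ) ∧ ht (extFun σ) n = (h : ℤ)),
    wt w n a b c (extFun σ)

end

noncomputable section

open Polynomial in
/-- The polynomials `P_w(a,b,c;z)`: `P_1 = 1 − a b z²`,
`P_2 = 1 − (a+b) z² + a b (1−c²) z⁴`, and
`P_{w+1} = (1 − (1−c²) z²)·P_w − c² z²·P_{w−1}` for `w ≥ 2`.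
(The value at `w = 0` is a dummy.) -/
def Pw (a b c : ℝ) : ℕ → Polynomial ℝ
  | 0 => 1
  | 1 => 1 - C (a * b) * X ^ 2
  | 2 => 1 - C (a + b) * X ^ 2 + C (a * b * (1 - c ^ 2)) * X ^ 4
  | (n + 3) =>
      (1 - C (1 - c ^ 2) * X ^ 2) * Pw a b c (n + 2) - C (c ^ 2) * X ^ 2 * Pw a b c (n + 1)

end

/-!
Classify walks by their last step: let `U_h` and `D_h` be the generating functions of the walks
ending at height `h` with an up, resp. down, step. Removing the last step gives the transfer
equations `U_h = β_h z (c U_{h-1} + D_{h-1})`, with `c U_0` replaced by `1` (the empty walk), and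
`D_h = α_h z (U_{h+1} + c D_{h+1})`, where `α_0 = a`, `β_w = b` and all other factors are `1`.
The loop series is `1 + D_0`. With `Q_d = P_d(0,b,c;z)`, the relation
`Q_{d+1} D_{w-d} = c (Q_d - Q_{d+1}) U_{w-d}` starts from `D_w = 0` and is pushed down one level
at a time by the recurrence of `Q`; the last elimination step, at height `0`, together with
`P_w(a) = (1 - a) Q_w + a Q_{w+1}` gives the identity.
-/

lemma ht_zero (σ : ℕ → Bool) : ht σ 0 = 0 := Finset.sum_range_zero _

lemma ht_succ (σ : ℕ → Bool) (k : ℕ) : ht σ (k + 1) = ht σ k + stepVal (σ k) :=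
  Finset.sum_range_succ _ _

lemma ht_congr {σ σ' : ℕ → Bool} {k : ℕ} (h : ∀ i < k, σ i = σ' i) : ht σ k = ht σ' k :=
  Finset.sum_congr rfl fun i hi => by rw [h i (Finset.mem_range.mp hi)]

lemma isWalk_succ_iff {w n : ℕ} {σ : ℕ → Bool} :
    IsWalk w (n + 1) σ ↔ IsWalk w n σ ∧ 0 ≤ ht σ (n + 1) ∧ ht σ (n + 1) ≤ w := by
  simp only [IsWalk, Nat.le_succ_iff, or_imp, forall_and, forall_eq]
  tauto

lemma isWalk_congr {w n : ℕ} {σ σ' : ℕ → Bool} (h : ∀ i < n, σ i = σ' i) :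
    IsWalk w n σ ↔ IsWalk w n σ' :=
  forall₂_congr fun k hk => by rw [ht_congr fun i hi => h i (hi.trans_le hk)]

lemma wt_congr {w n : ℕ} {a b c : ℝ} {σ σ' : ℕ → Bool} (h : ∀ i < n, σ i = σ' i) :
    wt w n a b c σ = wt w n a b c σ' := by
  have hht : ∀ k ∈ Finset.Icc 1 n, ht σ k = ht σ' k := fun k hk =>
    ht_congr fun i hi => h i (hi.trans_le (Finset.mem_Icc.mp hk).2)
  have hma : ma n σ = ma n σ' := congrArg Finset.card <| Finset.filter_congr fun k hk => by
    rw [hht k hk]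
  have hmb : mb w n σ = mb w n σ' := congrArg Finset.card <| Finset.filter_congr fun k hk => by
    rw [hht k hk]
  have hmc : mc n σ = mc n σ' := congrArg Finset.card <| Finset.filter_congr fun i hi => by
    rw [Finset.mem_range] at hi
    rw [h i (by omega), h (i + 1) (by omega)]
  rw [wt, wt, hma, hmb, hmc]

lemma card_filter_Icc_succ (p : ℕ → Prop) [DecidablePred p] (n : ℕ) :
    ((Finset.Icc 1 (n + 1)).filter p).card
      = ((Finset.Icc 1 n).filter p).card + if p (n + 1) then 1 else 0 := by
  rw [Finset.card_filter, Finset.card_filter, Finset.sum_Icc_succ_top (Nat.le_add_left 1 n)]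

lemma mc_succ (n : ℕ) (σ : ℕ → Bool) :
    mc (n + 1) σ = mc n σ + if 0 < n ∧ σ (n - 1) = σ n then 1 else 0 := by
  cases n with
  | zero => simp [mc]
  | succ m =>
    simp only [mc, Nat.add_sub_cancel, Finset.card_filter, Finset.sum_range_succ]
    simp

/-- The factor of `wt` contributed by a visit to height `h`; it is `0` off the strip, so that it
also records the strip constraint. -/
def levelWeight (w : ℕ) (a b : ℝ) (h : ℤ) : ℝ :=
  if 0 ≤ h ∧ h ≤ w then (if h = 0 then a else 1) * (if h = w then b else 1) else 0

lemma wt_succ (w n : ℕ) (a b c : ℝ) (σ : ℕ → Bool)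
    (hσ : 0 ≤ ht σ (n + 1) ∧ ht σ (n + 1) ≤ w) :
    wt w (n + 1) a b c σ = wt w n a b c σ * levelWeight w a b (ht σ (n + 1)) *
      if 0 < n ∧ σ (n - 1) = σ n then c else 1 := by
  simp only [wt, ma, mb, card_filter_Icc_succ, mc_succ, levelWeight, if_pos hσ, pow_add]
  split_ifs <;> simp only [pow_one, pow_zero] <;> ring

section Snoc

variable {n : ℕ} (τ : Fin n → Bool) (s : Bool)

lemma extFun_snoc_of_lt : ∀ i < n, extFun (Fin.snoc τ s) i = extFun τ i := fun i hi => by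
  simp [extFun, hi, Nat.lt_succ_of_lt hi, Fin.snoc]

lemma extFun_snoc_self : extFun (Fin.snoc τ s) n = s := by
  simp [extFun, Fin.snoc]

lemma ht_extFun_snoc : ht (extFun (Fin.snoc τ s)) (n + 1) = ht (extFun τ) n + stepVal s := by
  rw [ht_succ, ht_congr (extFun_snoc_of_lt τ s), extFun_snoc_self]

lemma isWalk_extFun_snoc_iff {w : ℕ} :
    IsWalk w (n + 1) (extFun (Fin.snoc τ s)) ↔
      IsWalk w n (extFun τ) ∧ 0 ≤ ht (extFun τ) n + stepVal s ∧
        ht (extFun τ) n + stepVal s ≤ w := by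
  rw [isWalk_succ_iff, isWalk_congr (extFun_snoc_of_lt τ s), ht_extFun_snoc]

lemma wt_extFun_snoc {w : ℕ} (a b c : ℝ)
    (hτ : 0 ≤ ht (extFun τ) n + stepVal s ∧ ht (extFun τ) n + stepVal s ≤ w) :
    wt w (n + 1) a b c (extFun (Fin.snoc τ s)) =
      wt w n a b c (extFun τ) * levelWeight w a b (ht (extFun τ) n + stepVal s) *
        if 0 < n ∧ extFun τ (n - 1) = s then c else 1 := by
  rw [← ht_extFun_snoc] at hτ ⊢
  rw [wt_succ w n a b c _ hτ, wt_congr (extFun_snoc_of_lt τ s), extFun_snoc_self]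
  rcases Nat.eq_zero_or_pos n with rfl | hn
  · simp
  · rw [extFun_snoc_of_lt τ s (n - 1) (by omega)]

end Snoc

noncomputable def walksTo (w n : ℕ) (h : ℤ) : Finset (Fin n → Bool) :=
  Finset.univ.filter fun σ => IsWalk w n (extFun σ) ∧ ht (extFun σ) n = h

lemma Zh_eq_sum_walksTo (w n h : ℕ) (a b c : ℝ) :
    Zh w n h a b c = ∑ σ ∈ walksTo w n h, wt w n a b c (extFun σ) := rfl

lemma walksTo_zero (w : ℕ) (h : ℤ) :
    walksTo w 0 h = if h = 0 then Finset.univ else ∅ := by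
  have hwalk : IsWalk w 0 (extFun (Fin.elim0 : Fin 0 → Bool)) := fun k hk => by
    rw [Nat.le_zero.mp hk, ht_zero]
    exact ⟨le_rfl, Int.natCast_nonneg w⟩
  ext σ
  rw [Subsingleton.elim σ Fin.elim0]
  split_ifs with h0 <;> simp [walksTo, hwalk, ht_zero, h0, eq_comm]

lemma snoc_mem_walksTo_iff {w n : ℕ} {h : ℤ} (τ : Fin n → Bool) (s : Bool) :
    Fin.snoc τ s ∈ walksTo w (n + 1) h ↔
      τ ∈ walksTo w n (h - stepVal s) ∧ 0 ≤ h ∧ h ≤ w := by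
  simp only [walksTo, Finset.mem_filter, Finset.mem_univ, true_and,
    isWalk_extFun_snoc_iff, ht_extFun_snoc]
  constructor
  · rintro ⟨⟨hτ, h0, hw⟩, rfl⟩
    exact ⟨⟨hτ, by ring⟩, h0, hw⟩
  · rintro ⟨⟨hτ, hh⟩, h0, hw⟩
    rw [hh, sub_add_cancel]
    exact ⟨⟨hτ, h0, hw⟩, rfl⟩

lemma sum_filter_last_eq_sum_snoc {α M : Type*} [Fintype α] [DecidableEq α] [AddCommMonoid M]
    {n : ℕ} (S : Finset (Fin (n + 1) → α)) (a : α) (f : (Fin (n + 1) → α) → M) :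
    ∑ σ ∈ S with σ (Fin.last n) = a, f σ =
      ∑ τ ∈ Finset.univ.filter (fun τ : Fin n → α => Fin.snoc τ a ∈ S), f (Fin.snoc τ a) := by
  refine Finset.sum_nbij' Fin.init (fun τ => Fin.snoc τ a) ?_ ?_ ?_ ?_ ?_ <;>
    simp only [Finset.mem_filter, Finset.mem_univ, true_and, Fin.snoc_last,
      Fin.init_snoc, and_true, imp_self, implies_true]
  all_goals
    rintro σ ⟨hσ, rfl⟩
    simp [Fin.snoc_init_self, hσ]

noncomputable def lastStepSum (w : ℕ) (h : ℤ) (s : Bool) (a b c : ℝ) : ℕ → ℝ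
  | 0 => 0
  | n + 1 => ∑ σ ∈ walksTo w (n + 1) h with σ (Fin.last n) = s, wt w (n + 1) a b c (extFun σ)

lemma Zh_succ (w n h : ℕ) (a b c : ℝ) :
    Zh w (n + 1) h a b c = ∑ s, lastStepSum w h s a b c (n + 1) :=
  (Finset.sum_fiberwise _ _ _).symm

lemma sum_walksTo_mul_stiffness (w n : ℕ) (h : ℤ) (s : Bool) (a b c : ℝ) :
    ∑ τ ∈ walksTo w n h, wt w n a b c (extFun τ) *
        (if 0 < n ∧ extFun τ (n - 1) = s then c else 1) =
      (if n = 0 ∧ h = 0 then 1 else 0) +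
        ∑ s', (if s' = s then c else 1) * lastStepSum w h s' a b c n := by
  cases n with
  | zero =>
    rw [walksTo_zero]
    by_cases h0 : h = 0 <;> simp [wt, ma, mb, mc, lastStepSum, h0]
  | succ m =>
    rw [← Finset.sum_fiberwise _ (fun τ : Fin (m + 1) → Bool => τ (Fin.last m))]
    simp only [Nat.add_eq_zero_iff, one_ne_zero, and_false, false_and, if_false, zero_add,
      lastStepSum, Finset.mul_sum]
    refine Finset.sum_congr rfl fun s' _ => Finset.sum_congr rfl fun τ hτ => ?_
    rw [(Finset.mem_filter.mp hτ).2.symm]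
    simp [extFun, Fin.last, mul_comm]

lemma lastStepSum_succ (w n : ℕ) (h : ℤ) (s : Bool) (a b c : ℝ) :
    lastStepSum w h s a b c (n + 1) = levelWeight w a b h *
      ((if n = 0 ∧ h = stepVal s then 1 else 0) +
        ∑ s', (if s' = s then c else 1) * lastStepSum w (h - stepVal s) s' a b c n) := by
  simp only [← sub_eq_zero (a := h) (b := stepVal s)]
  rw [lastStepSum, sum_filter_last_eq_sum_snoc, ← sum_walksTo_mul_stiffness, Finset.mul_sum]
  simp_rw [snoc_mem_walksTo_iff]
  by_cases hstrip : 0 ≤ h ∧ h ≤ w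
  · simp only [hstrip, and_true, Finset.filter_mem_eq_inter, Finset.univ_inter]
    refine Finset.sum_congr rfl fun τ hτ => ?_
    have hht : ht (extFun τ) n + stepVal s = h := by
      rw [(Finset.mem_filter.mp hτ).2.2, sub_add_cancel]
    rw [wt_extFun_snoc τ s a b c (hht ▸ hstrip), hht]
    ring
  · simp [hstrip, levelWeight]

open PowerSeries in
noncomputable def lastStepSeries (w : ℕ) (h : ℤ) (s : Bool) (a b c : ℝ) : PowerSeries ℝ :=
  mk (lastStepSum w h s a b c)

section Series

open PowerSeries

variable {w : ℕ} {a b c : ℝ}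

lemma lastStepSeries_eq (h : ℤ) (s : Bool) :
    lastStepSeries w h s a b c = C (levelWeight w a b h) * X *
      (C (if h = stepVal s then 1 else 0) +
        ∑ s', C (if s' = s then c else 1) * lastStepSeries w (h - stepVal s) s' a b c) := by
  ext n
  cases n with
  | zero => simp [lastStepSeries, lastStepSum]
  | succ m =>
    rw [mul_assoc, coeff_C_mul, coeff_succ_X_mul, lastStepSeries, coeff_mk, lastStepSum_succ]
    by_cases hs : h = stepVal s <;> simp [lastStepSeries, coeff_C_mul, coeff_one, hs]

lemma lastStepSeries_eq_zero {h : ℤ} (hh : ¬(0 ≤ h ∧ h ≤ w)) (s : Bool) :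
    lastStepSeries w h s a b c = 0 := by
  rw [lastStepSeries_eq, levelWeight, if_neg hh]
  simp

lemma lastStepSeries_true (h : ℤ) :
    lastStepSeries w h true a b c = C (levelWeight w a b h) * X *
      (C (if h = 1 then 1 else 0) + C c * lastStepSeries w (h - 1) true a b c +
        lastStepSeries w (h - 1) false a b c) := by
  rw [lastStepSeries_eq]
  simp [stepVal, add_assoc]

lemma lastStepSeries_false (h : ℤ) :
    lastStepSeries w h false a b c = C (levelWeight w a b h) * X *
      (C (if h = -1 then 1 else 0) + lastStepSeries w (h + 1) true a b c +
        C c * lastStepSeries w (h + 1) false a b c) := by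
  rw [lastStepSeries_eq]
  simp [stepVal, add_assoc]

end Series

section Polynomials

open Polynomial

variable (a b c : ℝ)

lemma Pw_succ_succ_succ (n : ℕ) : Pw a b c (n + 3) =
    (1 - C (1 - c ^ 2) * X ^ 2) * Pw a b c (n + 2) - C (c ^ 2) * X ^ 2 * Pw a b c (n + 1) :=
  rfl

lemma Pw_zero_sub_Pw_zero (d : ℕ) :
    Pw 0 b c (d + 1) - Pw 0 b c (d + 2) = C (if d = 0 then b else 1) * X ^ 2 *
      (Pw 0 b c (d + 1) + C c ^ 2 * (Pw 0 b c d - Pw 0 b c (d + 1))) := by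
  cases d with
  | zero => simp [Pw]
  | succ e =>
    rw [Pw_succ_succ_succ]
    simp only [map_sub, map_one, map_pow, Nat.add_one_ne_zero, if_false]
    ring

lemma Pw_succ_eq_lerp (n : ℕ) :
    Pw a b c (n + 1) = (1 - C a) * Pw 0 b c (n + 1) + C a * Pw 0 b c (n + 2) := by
  induction n using Nat.twoStepInduction with
  | zero => simp [Pw]; ring
  | one => simp [Pw]; ring
  | more n ih₁ ih₂ =>
    linear_combination (norm := ring_nf) Pw_succ_succ_succ a b c n
      + (1 - C (1 - c ^ 2) * X ^ 2) * ih₂ - C (c ^ 2) * X ^ 2 * ih₁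
      - (1 - C a) * Pw_succ_succ_succ 0 b c n - C a * Pw_succ_succ_succ 0 b c (n + 1)

end Polynomials

/-- One elimination step in the transfer equations: `u` and `d` are the up and down series at some
height, `d'` the down series one level lower, `v` the other input of `u`, and `q₀, q₁, q₂` are
consecutive `Q`'s. -/
lemma transfer_step {R : Type*} [CommRing R] {x c α β q₀ q₁ q₂ u d d' v : R}
    (hq : q₁ - q₂ = β * x ^ 2 * (q₁ + c ^ 2 * (q₀ - q₁)))
    (hu : u = β * x * (v + d')) (hd' : d' = α * x * (u + c * d))
    (hd : q₁ * d = c * (q₀ - q₁) * u) :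
    q₁ * d' = α * (q₁ - q₂) * (v + d') := by
  linear_combination q₁ * hd' + α * x * c * hd + α * x * (q₁ + c ^ 2 * (q₀ - q₁)) * hu
    - α * (v + d') * hq

section Transfer

open PowerSeries

variable {w : ℕ} {a b c : ℝ}

lemma levelWeight_of_pos {h : ℤ} (h0 : 0 < h) (hw : h ≤ w) :
    levelWeight w a b h = if h = w then b else 1 := by
  simp [levelWeight, h0.le, hw, h0.ne']

lemma levelWeight_zero (hw : 1 ≤ w) : levelWeight w a b 0 = a := by
  have hw' : (0 : ℤ) ≠ w := by omega
  simp [levelWeight, hw']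

lemma lastStepSeries_zero_true : lastStepSeries w 0 true a b c = 0 := by
  rw [lastStepSeries_true, lastStepSeries_eq_zero (by omega), lastStepSeries_eq_zero (by omega)]
  simp

lemma lastStepSeries_self_false : lastStepSeries w w false a b c = 0 := by
  rw [lastStepSeries_false, lastStepSeries_eq_zero (by omega), lastStepSeries_eq_zero (by omega)]
  simp

lemma lastStepSeries_one_true (hw : 1 ≤ w) :
    lastStepSeries w 1 true a b c =
      C (if 1 = w then b else 1) * X * (1 + lastStepSeries w 0 false a b c) := by
  rw [lastStepSeries_true, levelWeight_of_pos one_pos (by exact_mod_cast hw), sub_self,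
    lastStepSeries_zero_true]
  simp [eq_comm]

lemma lastStepSeries_true_of_two_le {h : ℤ} (h2 : 2 ≤ h) (hw : h ≤ w) :
    lastStepSeries w h true a b c = C (if h = w then b else 1) * X *
      (C c * lastStepSeries w (h - 1) true a b c + lastStepSeries w (h - 1) false a b c) := by
  rw [lastStepSeries_true, levelWeight_of_pos (by omega) hw, if_neg (show h ≠ 1 by omega)]
  simp

lemma lastStepSeries_zero_false (hw : 1 ≤ w) :
    lastStepSeries w 0 false a b c = C a * X *
      (lastStepSeries w 1 true a b c + C c * lastStepSeries w 1 false a b c) := by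
  rw [lastStepSeries_false, levelWeight_zero hw]
  simp

lemma lastStepSeries_false_of_pos {h : ℤ} (h0 : 0 < h) (hw : h < w) :
    lastStepSeries w h false a b c = X *
      (lastStepSeries w (h + 1) true a b c + C c * lastStepSeries w (h + 1) false a b c) := by
  rw [lastStepSeries_false, levelWeight_of_pos h0 hw.le, if_neg hw.ne, if_neg (by omega)]
  simp

lemma loopSeries_eq :
    mk (fun n => Zh w n 0 a b c) = 1 + lastStepSeries w 0 false a b c := by
  ext n
  cases n with
  | zero => simp [Zh_eq_sum_walksTo, walksTo_zero, wt, ma, mb, mc, lastStepSeries, lastStepSum]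
  | succ m =>
    have h0 := congrArg (coeff (m + 1))
      (lastStepSeries_zero_true (w := w) (a := a) (b := b) (c := c))
    simp only [lastStepSeries, coeff_mk, map_zero] at h0
    simp [Zh_succ, lastStepSeries, h0]

lemma Pw_zero_sub_Pw_zero_coe (b c : ℝ) (d : ℕ) :
    (Pw 0 b c (d + 1) : ℝ⟦X⟧) - (Pw 0 b c (d + 2) : ℝ⟦X⟧) =
      C (if d = 0 then b else 1) * X ^ 2 *
      ((Pw 0 b c (d + 1) : ℝ⟦X⟧) +
        C c ^ 2 * ((Pw 0 b c d : ℝ⟦X⟧) - (Pw 0 b c (d + 1) : ℝ⟦X⟧))) := by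
  simpa using
    congrArg (Polynomial.coeToPowerSeries.ringHom (R := ℝ)) (Pw_zero_sub_Pw_zero b c d)

lemma Pw_zero_succ_mul_lastStepSeries_false {w d : ℕ} (a b c : ℝ) (hd : d < w) :
    (Pw 0 b c (d + 1) : ℝ⟦X⟧) * lastStepSeries w (w - d) false a b c =
      C c * ((Pw 0 b c d : ℝ⟦X⟧) - (Pw 0 b c (d + 1) : ℝ⟦X⟧)) *
        lastStepSeries w (w - d) true a b c := by
  induction d with
  | zero => simp [lastStepSeries_self_false, Pw]
  | succ d ih =>
    have hh : ((w - (d + 1 : ℕ) : ℤ)) + 1 = w - d := by push_cast; ring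
    have hh' : (w - d : ℤ) - 1 = w - (d + 1 : ℕ) := by push_cast; ring
    have hu := lastStepSeries_true_of_two_le (w := w) (a := a) (b := b) (c := c) (h := w - d)
      (by omega) (by omega)
    have hβ : ((w : ℤ) - d = w) = (d = 0) := by simp
    simp only [hβ, hh'] at hu
    have hd' := lastStepSeries_false_of_pos (a := a) (b := b) (c := c) (w := w)
      (h := w - (d + 1 : ℕ)) (by omega) (by omega)
    rw [hh, ← one_mul X] at hd'
    have key := transfer_step (Pw_zero_sub_Pw_zero_coe b c d) hu hd' (ih (by omega))
    linear_combination key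

end Transfer

theorem loop_generating_function_general (a b c : ℝ)
    (w : ℕ) (hw : 1 ≤ w) :
    ((Pw a b c w : PowerSeries ℝ) * PowerSeries.mk (fun n => Zh w n 0 a b c)) =
      (Pw 0 b c w : PowerSeries ℝ) := by
  obtain ⟨k, rfl⟩ := Nat.exists_eq_add_of_le' hw
  have hD₁ := Pw_zero_succ_mul_lastStepSeries_false a b c (Nat.lt_succ_self k)
  rw [show ((k + 1 : ℕ) : ℤ) - k = 1 by push_cast; ring] at hD₁
  have hU₁ := lastStepSeries_one_true (a := a) (b := b) (c := c) hw
  simp only [show (1 = k + 1) = (k = 0) by simp] at hU₁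
  have hD₀ := lastStepSeries_zero_false (a := a) (b := b) (c := c) hw
  have key := transfer_step (Pw_zero_sub_Pw_zero_coe b c k) hU₁ hD₀ hD₁
  have hlerp : (Pw a b c (k + 1) : PowerSeries ℝ) =
      (1 - PowerSeries.C a) * (Pw 0 b c (k + 1) : PowerSeries ℝ) +
        PowerSeries.C a * (Pw 0 b c (k + 2) : PowerSeries ℝ) := by
    simpa using congrArg (Polynomial.coeToPowerSeries.ringHom (R := ℝ)) (Pw_succ_eq_lerp a b c k)
  rw [loopSeries_eq, hlerp]
  linear_combination key

/-- `P_w(a,b,c;z) · (Σ_n Z_{w,n,0} zⁿ) = P_w(0,b,c;z)` as formal power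
series. -/
theorem loop_generating_function (a b c : ℝ) (ha : 0 < a) (hb : 0 < b) (hc : 0 < c)
    (w : ℕ) (hw : 1 ≤ w) :
    ((Pw a b c w : PowerSeries ℝ) * PowerSeries.mk (fun n => Zh w n 0 a b c)) =
      (Pw 0 b c w : PowerSeries ℝ) :=
  loop_generating_function_general a b c w hw
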